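/- arXiv:1104.5052 — 6 statements merged into one kernel-verified Lean document; each statement's English description precedes it below -/
import Mathlib

section
/- For a positive integer n, every invertible element of ℤ/nℤ squares to 1 (equivalently, 1's appear only on the diagonal of the multiplication table of ℤ/nℤ) if and only if n divides 24. -/
/-! If every unit of `ZMod n` squares to `1`, the same holds for every divisor of `n`, since
units lift along `ZMod n → ZMod m`. Hence `5 ∤ n` (as `2² ≠ 1` in `ZMod 5`), so `5` is a unit
mod `n` and `n ∣ 5² - 1 = 24`. Conversely every unit of `ZMod 24` squares to `1`, and this
descends to all divisors of `24`. -/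

namespace ZMod

theorem units_pow_eq_one_of_dvd {m n k : ℕ} [NeZero n] (hmn : m ∣ n)
    (h : ∀ a : (ZMod n)ˣ, a ^ k = 1) (a : (ZMod m)ˣ) : a ^ k = 1 := by
  obtain ⟨b, rfl⟩ := unitsMap_surjective hmn a
  rw [← map_pow, h b, map_one]

theorem sq_modEq_one_of_units_sq_eq_one {n a : ℕ} (h : ∀ u : (ZMod n)ˣ, u ^ 2 = 1)
    (ha : a.Coprime n) : a ^ 2 ≡ 1 [MOD n] := by
  rw [← natCast_eq_natCast_iff, Nat.cast_pow, Nat.cast_one, ← coe_unitOfCoprime a ha,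
    ← Units.val_pow_eq_pow_val, h, Units.val_one]

theorem exists_units_sq_ne_one_five : ∃ a : (ZMod 5)ˣ, a ^ 2 ≠ 1 := by
  decide

theorem units_sq_eq_one_twentyFour (a : (ZMod 24)ˣ) : a ^ 2 = 1 := by
  revert a
  decide

end ZMod

theorem units_sq_one_iff_dvd_24 (n : ℕ) (hn : 0 < n) :
    (∀ a : (ZMod n)ˣ, a ^ 2 = 1) ↔ n ∣ 24 := by
  have : NeZero n := ⟨hn.ne'⟩
  constructor
  · intro h
    have h5 : ¬ 5 ∣ n := by
      intro h5
      obtain ⟨a, ha⟩ := ZMod.exists_units_sq_ne_one_five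
      exact ha (ZMod.units_pow_eq_one_of_dvd h5 h a)
    have h25 : 5 ^ 2 ≡ 1 [MOD n] := ZMod.sq_modEq_one_of_units_sq_eq_one h
      ((Nat.Prime.coprime_iff_not_dvd Nat.prime_five).2 h5)
    exact (Nat.modEq_iff_dvd' (by norm_num)).1 h25.symm
  · intro h
    exact ZMod.units_pow_eq_one_of_dvd h ZMod.units_sq_eq_one_twentyFour
end

section
/- For a positive integer n, the condition that n divides a² − 1 for every integer a with gcd(a, n) = 1 holds if and only if n divides p² − 1 for every prime number p that does not divide n. -/
/-! By Dirichlet's theorem every residue class of integers coprime to `n` contains a prime `p`,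
which can be taken larger than `n`, so that `p ∤ n`; and `a ≡ p [ZMOD n]` gives `a ^ 2 ≡ p ^ 2`. -/

theorem Nat.exists_prime_not_dvd_and_zmodEq {n : ℕ} (hn : 0 < n) {a : ℤ} (ha : IsCoprime a n) :
    ∃ p : ℕ, p.Prime ∧ ¬ p ∣ n ∧ (p : ℤ) ≡ a [ZMOD n] := by
  obtain ⟨p, hpn, hp, hpa⟩ := Nat.forall_exists_prime_gt_and_zmodEq n hn.ne' ha
  exact ⟨p, hp, fun hdvd => (Nat.le_of_dvd hn hdvd).not_gt hpn, hpa⟩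

theorem coprime_dvd_iff_prime_dvd (n : ℕ) (hn : 0 < n) :
    (∀ a : ℤ, Int.gcd a n = 1 → (n : ℤ) ∣ a ^ 2 - 1) ↔
      ∀ p : ℕ, p.Prime → ¬ p ∣ n → (n : ℤ) ∣ (p : ℤ) ^ 2 - 1 := by
  constructor
  · intro h p hp hpn
    exact h p (Int.gcd_natCast_natCast p n ▸ (hp.coprime_iff_not_dvd.mpr hpn))
  · intro h a ha
    obtain ⟨p, hp, hpn, hpa⟩ :=
      Nat.exists_prime_not_dvd_and_zmodEq hn (Int.isCoprime_iff_gcd_eq_one.mpr ha)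
    have hsq : (n : ℤ) ∣ a ^ 2 - (p : ℤ) ^ 2 := (hpa.pow 2).dvd
    simpa only [sub_add_sub_cancel] using dvd_add hsq (h p hp hpn)
end

section
/- If a positive integer n has the property that n divides p² − 1 for every prime p not dividing n, then n divides 24. -/
/-! If `5 ∤ n`, the prime `p = 5` already gives `n ∣ 5² - 1 = 24`. If `5 ∣ n`, Dirichlet's theorem
supplies a prime `p > n` with `p ≡ 2 (mod 5)`; then `5 ∣ n ∣ p² - 1`, although `p² ≡ 4 (mod 5)`. -/

theorem Nat.exists_prime_not_dvd_and_cast_eq {q : ℕ} [NeZero q] {a : ZMod q} (ha : IsUnit a)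
    {n : ℕ} (hn : 0 < n) : ∃ p, p.Prime ∧ ¬ p ∣ n ∧ (p : ZMod q) = a := by
  obtain ⟨p, hpn, hp, hpa⟩ := Nat.forall_exists_prime_gt_and_eq_mod ha n
  exact ⟨p, hp, fun hdvd => (Nat.le_of_dvd hn hdvd).not_gt hpn, hpa⟩

theorem Int.not_five_dvd_sq_sub_one_of_cast_eq_two {p : ℤ} (hp : (p : ZMod 5) = 2) :
    ¬ (5 : ℤ) ∣ p ^ 2 - 1 := by
  have : ((p ^ 2 - 1 : ℤ) : ZMod 5) ≠ 0 := by
    push_cast [hp]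
    decide
  exact_mod_cast mt (ZMod.intCast_zmod_eq_zero_iff_dvd _ 5).mpr this

theorem diagonal_property_dvd_24 (n : ℕ) (hn : 0 < n)
    (h : ∀ p : ℕ, p.Prime → ¬ p ∣ n → (n : ℤ) ∣ (p : ℤ) ^ 2 - 1) :
    n ∣ 24 := by
  by_cases h5 : 5 ∣ n
  · obtain ⟨p, hp, hpn, hp2⟩ :=
      Nat.exists_prime_not_dvd_and_cast_eq (q := 5) (a := 2) (by decide) hn
    refine absurd ((Int.natCast_dvd_natCast.mpr h5).trans (h p hp hpn)) ?_
    exact Int.not_five_dvd_sq_sub_one_of_cast_eq_two (by exact_mod_cast hp2)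
  · exact Int.natCast_dvd_natCast.mp (h 5 Nat.prime_five h5)
end

section
/- If a positive integer n has the diagonal property, then every prime divisor of n is at most 3; that is, n = 2^u · 3^v for some nonnegative integers u and v. -/
/-!
If `n` has the diagonal property, then `a ^ 2 ≡ 1 [MOD n]` for every `a` coprime to `n`, since
such an `a` is a product of primes not dividing `n`. So every unit of `ZMod n` squares to `1`,
and hence so does every unit of `ZMod q` for a prime `q ∣ n`, the reduction map on units being
surjective. For `q > 2` the unit `2` then gives `4 = 1` in `ZMod q`, that is `q ∣ 3`.
-/

theorem ZMod.le_three_of_forall_units_sq_eq_one {q : ℕ} (hq : q.Prime)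
    (h : ∀ u : (ZMod q)ˣ, u ^ 2 = 1) : q ≤ 3 := by
  by_contra! hq3
  have : Fact q.Prime := ⟨hq⟩
  have h2 : (2 : ZMod q) ≠ 0 := by
    intro h20
    have := Nat.le_of_dvd two_pos ((ZMod.natCast_eq_zero_iff 2 q).mp (by exact_mod_cast h20))
    omega
  have h4 : (2 : ZMod q) ^ 2 = 1 := by
    simpa using congrArg Units.val (h (Units.mk0 2 h2))
  have : ((3 : ℕ) : ZMod q) = 0 := by push_cast; linear_combination h4
  have := Nat.le_of_dvd three_pos ((ZMod.natCast_eq_zero_iff 3 q).mp this)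
  omega

theorem Nat.eq_two_pow_mul_three_pow_of_forall_prime_dvd_le_three {n : ℕ} (hn : n ≠ 0)
    (h : ∀ p : ℕ, p.Prime → p ∣ n → p ≤ 3) :
    n = 2 ^ n.factorization 2 * 3 ^ n.factorization 3 := by
  have hsupp : n.factorization.support ⊆ {2, 3} := by
    intro p hp
    rw [Nat.support_factorization, Nat.mem_primeFactors] at hp
    have := h p hp.1 hp.2.1
    have := hp.1.two_le
    interval_cases p <;> simp_all
  conv_lhs => rw [← Nat.prod_factorization_pow_eq_self hn]
  rw [Finsupp.prod_of_support_subset _ hsupp _ (fun _ _ => pow_zero _)]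
  simp

def HasDiagonalProperty (n : ℕ) : Prop :=
  ∀ p : ℕ, p.Prime → ¬ p ∣ n → (n : ℤ) ∣ (p : ℤ) ^ 2 - 1

namespace HasDiagonalProperty

variable {n : ℕ}

theorem sq_natCast_eq_one (h : HasDiagonalProperty n) {a : ℕ} (ha : a.Coprime n) :
    (a : ZMod n) ^ 2 = 1 := by
  induction a using Nat.recOnMul with
  | zero =>
    have : Subsingleton (ZMod n) := by
      rw [(Nat.coprime_zero_left n).mp ha]
      infer_instance
    exact Subsingleton.elim _ _
  | one => simp
  | prime p hp =>
    have hdvd := h p hp ((Nat.Prime.coprime_iff_not_dvd hp).mp ha)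
    have := (ZMod.intCast_zmod_eq_zero_iff_dvd _ n).mpr hdvd
    push_cast at this
    exact sub_eq_zero.mp this
  | mul a b iha ihb =>
    rw [Nat.cast_mul, mul_pow, iha (Nat.Coprime.coprime_mul_right ha),
      ihb (Nat.Coprime.coprime_mul_left ha), one_mul]

theorem units_sq_eq_one [NeZero n] (h : HasDiagonalProperty n) (u : (ZMod n)ˣ) : u ^ 2 = 1 := by
  ext
  rw [Units.val_pow_eq_pow_val, Units.val_one, ← ZMod.natCast_zmod_val (u : ZMod n)]
  exact h.sq_natCast_eq_one (ZMod.val_coe_unit_coprime u)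

theorem le_three_of_prime_dvd [NeZero n] (h : HasDiagonalProperty n) {q : ℕ} (hq : q.Prime)
    (hqn : q ∣ n) : q ≤ 3 := by
  refine ZMod.le_three_of_forall_units_sq_eq_one hq fun u => ?_
  obtain ⟨w, rfl⟩ := ZMod.unitsMap_surjective hqn u
  rw [← map_pow, h.units_sq_eq_one w, map_one]

end HasDiagonalProperty

theorem diagonal_property_eq_two_pow_mul_three_pow (n : ℕ) (hn : 0 < n)
    (h : ∀ p : ℕ, p.Prime → ¬ p ∣ n → (n : ℤ) ∣ (p : ℤ) ^ 2 - 1) :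
    ∃ u v : ℕ, n = 2 ^ u * 3 ^ v := by
  have : NeZero n := ⟨hn.ne'⟩
  have hdiag : HasDiagonalProperty n := h
  exact ⟨_, _, Nat.eq_two_pow_mul_three_pow_of_forall_prime_dvd_le_three hn.ne'
    fun _ hq hqn => hdiag.le_three_of_prime_dvd hq hqn⟩
end

section
/- Let n be a positive integer with the diagonal property, and let p be a prime with p² < n + 1 (equivalently, p < √(n+1)). Then p divides n. -/
theorem lt_sq_of_dvd_sq_sub_one {n a : ℕ} (ha : 1 < a) (h : (n : ℤ) ∣ (a : ℤ) ^ 2 - 1) :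
    n < a ^ 2 := by
  have hpos : (0 : ℤ) < (a : ℤ) ^ 2 - 1 := by
    have : (1 : ℤ) < (a : ℤ) ^ 2 := one_lt_pow₀ (by exact_mod_cast ha) two_ne_zero
    linarith
  have hle := Int.le_of_dvd hpos h
  zify
  linarith

theorem small_prime_dvd_of_diagonal_general (n : ℕ)
    (h : ∀ p : ℕ, p.Prime → ¬ p ∣ n → (n : ℤ) ∣ (p : ℤ) ^ 2 - 1)
    (p : ℕ) (hp : p.Prime) (hlt : p ^ 2 < n + 1) :
    p ∣ n := by
  by_contra hpn
  have := lt_sq_of_dvd_sq_sub_one hp.one_lt (h p hp hpn)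
  omega

theorem small_prime_dvd_of_diagonal (n : ℕ) (hn : 0 < n)
    (h : ∀ p : ℕ, p.Prime → ¬ p ∣ n → (n : ℤ) ∣ (p : ℤ) ^ 2 - 1)
    (p : ℕ) (hp : p.Prime) (hlt : p ^ 2 < n + 1) :
    p ∣ n :=
  small_prime_dvd_of_diagonal_general n h p hp hlt
end

section
/- If a positive integer n has the diagonal property, then n ≤ 24. -/
theorem ZMod.units_sq_eq_one_of_dvd {m n : ℕ} [NeZero n] (hmn : m ∣ n)
    (hsq : ∀ u : (ZMod n)ˣ, u ^ 2 = 1) (v : (ZMod m)ˣ) : v ^ 2 = 1 := by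
  obtain ⟨u, rfl⟩ := ZMod.unitsMap_surjective hmn v
  rw [← map_pow, hsq u, map_one]

namespace HasDiagonalProperty

variable {n : ℕ}

theorem not_five_dvd [NeZero n] (h : HasDiagonalProperty n) : ¬ 5 ∣ n := fun h5 =>
  absurd (ZMod.units_sq_eq_one_of_dvd h5 h.units_sq_eq_one (ZMod.unitOfCoprime 2 (by norm_num)))
    (by decide)

theorem dvd_twentyFour [NeZero n] (h : HasDiagonalProperty n) : n ∣ 24 := by
  have h24 := h 5 Nat.prime_five h.not_five_dvd
  norm_num at h24
  exact_mod_cast h24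

end HasDiagonalProperty

theorem diagonal_property_le_24 (n : ℕ) (hn : 0 < n)
    (h : ∀ p : ℕ, p.Prime → ¬ p ∣ n → (n : ℤ) ∣ (p : ℤ) ^ 2 - 1) :
    n ≤ 24 := by
  have : NeZero n := ⟨hn.ne'⟩
  exact Nat.le_of_dvd (by norm_num) (HasDiagonalProperty.dvd_twentyFour h)
end
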